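/- Normal form of algebraic extensions: let B ⊆ A be finite-dimensional subspaces of V with B strong in A, dim(A/B) = 1 and δ(A/B) = 0. Then there exist a ∈ A∖B, a nonzero b ∈ B and c ∈ ⋀²B such that A = B ⊕ K·a and N(A) = N(B) ⊕ K·(a∧b + c). -/
import Mathlib



/-!
Common notions: for a subspace `A` of an ambient `K`-vector space `M`, `wedge2 K A` is the
image of the exterior square `⋀² A` inside the exterior algebra of `M` (the span of the
products `a ∧ b` for `a, b ∈ A`).  For subspaces `C`, `B`, `fdim K C B` (resp. `cdim K C B`)
is the dimension of `B` over `C`, i.e. of the quotient `B / (C ∩ B)`, as a natural number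
(resp. as a cardinal), and `FinOver K C B` says that `B` is finite-dimensional over `C`.
Relative to a fixed subspace `N` of `⋀² M`, writing `N(X) := N ⊓ wedge2 K X`,
`pdim K N C B` is the relative predimension `δ(B/C) = dim(B/C) - dim(N(B)/N(C))` and
`pdim0 K N A = δ(A) = dim A - dim N(A)`.  `Strong K N B A` says that `B` is strong
(self-sufficient) in `A`:  `δ(C/B) ≥ 0` (stated in the equivalent subtraction-free form
`dim(N(C)/N(B)) ≤ dim(C/B)`) for every intermediate subspace `C` finite-dimensional over
`B`; `MinStrong K N B A` says that `A` is a minimal strong extension of `B`.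
-/

noncomputable section

universe u v

variable (K : Type u) [Field K] {M : Type v} [AddCommGroup M] [Module K M]

/-- The image of the exterior square `⋀² A` of a subspace `A` inside the exterior algebra
of the ambient space. -/
def wedge2 (A : Submodule K M) : Submodule K (ExteriorAlgebra K M) :=
  Submodule.span K
    {z | ∃ a ∈ A, ∃ b ∈ A, z = ExteriorAlgebra.ι K a * ExteriorAlgebra.ι K b}

/-- The relative dimension `dim (B / C)`, as a natural number. -/
def fdim (C B : Submodule K M) : ℕ :=
  Module.finrank K (↥B ⧸ Submodule.comap B.subtype C)

/-- The relative dimension `dim (B / C)`, as a cardinal. -/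
def cdim (C B : Submodule K M) : Cardinal :=
  Module.rank K (↥B ⧸ Submodule.comap B.subtype C)

/-- `B` is finite-dimensional over `C`. -/
def FinOver (C B : Submodule K M) : Prop :=
  Module.Finite K (↥B ⧸ Submodule.comap B.subtype C)

/-- The relative predimension `δ(B/C) = dim(B/C) - dim(N(B)/N(C))` with respect to `N`. -/
def pdim (N : Submodule K (ExteriorAlgebra K M)) (C B : Submodule K M) : ℤ :=
  (fdim K C B : ℤ) - (fdim K (N ⊓ wedge2 K C) (N ⊓ wedge2 K B) : ℤ)

/-- The predimension `δ(A) = dim A - dim N(A)` with respect to `N`. -/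
def pdim0 (N : Submodule K (ExteriorAlgebra K M)) (A : Submodule K M) : ℤ :=
  (Module.finrank K ↥A : ℤ) - (Module.finrank K ↥(N ⊓ wedge2 K A) : ℤ)

/-- `B` is strong (self-sufficient) in `A` with respect to `N`. -/
def Strong (N : Submodule K (ExteriorAlgebra K M)) (B A : Submodule K M) : Prop :=
  B ≤ A ∧ ∀ C : Submodule K M, B ≤ C → C ≤ A → FinOver K B C →
    cdim K (N ⊓ wedge2 K B) (N ⊓ wedge2 K C) ≤ Cardinal.lift.{u} (cdim K B C)

/-- `A` is a minimal strong extension of `B` with respect to `N`. -/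
def MinStrong (N : Submodule K (ExteriorAlgebra K M)) (B A : Submodule K M) : Prop :=
  Strong K N B A ∧ B < A ∧ ∀ C : Submodule K M, B < C → C < A → ¬ Strong K N C A




section Aux13

variable {K : Type u} [Field K] {M : Type v} [AddCommGroup M] [Module K M]

lemma wedge2_mono' {X Y : Submodule K M} (h : X ≤ Y) : wedge2 K X ≤ wedge2 K Y :=
  Submodule.span_mono (by rintro _ ⟨x, hx, y, hy, rfl⟩; exact ⟨x, h hx, y, h hy, rfl⟩)

lemma gen_of_fdim_one' {X Y : Submodule K M} (hXY : X ≤ Y) (h : fdim K X Y = 1) :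
    ∃ v ∈ Y, v ∉ X ∧ Y = X ⊔ Submodule.span K {v} := by
  set X' := Submodule.comap Y.subtype X with hX'
  obtain ⟨v, hv0, hvall⟩ := finrank_eq_one_iff'.mp h
  obtain ⟨w, hw⟩ := Submodule.Quotient.mk_surjective X' v
  refine ⟨(w : M), w.2, ?_, ?_⟩
  · intro hmem
    exact hv0 (by rw [← hw, Submodule.Quotient.mk_eq_zero]; exact hmem)
  · refine le_antisymm ?_ (sup_le hXY ?_)
    · intro x hx
      obtain ⟨cc, hc⟩ := hvall (Submodule.Quotient.mk (⟨x, hx⟩ : Y))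
      rw [← hw, ← Submodule.Quotient.mk_smul, Submodule.Quotient.eq] at hc
      have hc' : cc • (w : M) - x ∈ X := hc
      have hx' : x = (x - cc • (w : M)) + cc • (w : M) := by abel
      rw [hx']
      exact Submodule.add_mem _
        (Submodule.mem_sup_left (by simpa using X.neg_mem hc'))
        (Submodule.mem_sup_right (Submodule.smul_mem _ _ (Submodule.mem_span_singleton_self _)))
    · rw [Submodule.span_le, Set.singleton_subset_iff]; exact w.2

lemma wedge2_decomp' {B : Submodule K M} {a : M} {z : ExteriorAlgebra K M}
    (hz : z ∈ wedge2 K (B ⊔ Submodule.span K {a})) :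
    ∃ b ∈ B, ∃ c ∈ wedge2 K B, z = ExteriorAlgebra.ι K a * ExteriorAlgebra.ι K b + c := by
  set f : M →ₗ[K] ExteriorAlgebra K M :=
    (LinearMap.mulLeft K (ExteriorAlgebra.ι K a)).comp (ExteriorAlgebra.ι K) with hf
  have hle : wedge2 K (B ⊔ Submodule.span K {a}) ≤ Submodule.map f B ⊔ wedge2 K B := by
    rw [wedge2, Submodule.span_le]
    rintro _ ⟨x, hx, y, hy, rfl⟩
    obtain ⟨x', hx', sa, hsa, rfl⟩ := Submodule.mem_sup.mp hx
    obtain ⟨s, rfl⟩ := Submodule.mem_span_singleton.mp hsa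
    obtain ⟨y', hy', ta, hta, rfl⟩ := Submodule.mem_sup.mp hy
    obtain ⟨t, rfl⟩ := Submodule.mem_span_singleton.mp hta
    have hanti : ExteriorAlgebra.ι K x' * ExteriorAlgebra.ι K a
        = - (ExteriorAlgebra.ι K a * ExteriorAlgebra.ι K x') :=
      eq_neg_of_add_eq_zero_left (ExteriorAlgebra.ι_add_mul_swap x' a)
    have key : ExteriorAlgebra.ι K (x' + s • a) * ExteriorAlgebra.ι K (y' + t • a)
        = f (s • y' - t • x') + ExteriorAlgebra.ι K x' * ExteriorAlgebra.ι K y' := by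
      simp only [hf, LinearMap.comp_apply, LinearMap.mulLeft_apply, map_add, map_smul,
        map_sub, add_mul, mul_add, smul_mul_assoc, mul_smul_comm,
        ExteriorAlgebra.ι_sq_zero, smul_zero, smul_sub, hanti, smul_neg]
      module
    rw [key]
    exact Submodule.add_mem _
      (Submodule.mem_sup_left (Submodule.mem_map_of_mem
        (Submodule.sub_mem _ (Submodule.smul_mem _ _ hy') (Submodule.smul_mem _ _ hx'))))
      (Submodule.mem_sup_right (Submodule.subset_span ⟨x', hx', y', hy', rfl⟩))
  obtain ⟨u, hu, c, hc, rfl⟩ := Submodule.mem_sup.mp (hle hz)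
  obtain ⟨b, hb, rfl⟩ := hu
  exact ⟨b, hb, c, hc, rfl⟩

end Aux13

/-- normal form of algebraic extensions: if `B` is strong in `A`,
`dim(A/B) = 1` and `δ(A/B) = 0`, then there are `a ∈ A \ B`, a nonzero `b ∈ B` and
`c ∈ ⋀²B` with `A = B ⊕ K·a` and `N(A) = N(B) ⊕ K·(a∧b + c)`. -/
theorem statement13 {K : Type u} [Field K] {M : Type v} [AddCommGroup M] [Module K M]
    (N : Submodule K (ExteriorAlgebra K M)) (hN : N ≤ wedge2 K (⊤ : Submodule K M))
    (B A : Submodule K M) [FiniteDimensional K ↥A] (hBA : B ≤ A)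
    (hstrong : Strong K N B A) (hdim : fdim K B A = 1) (hdelta : pdim K N B A = 0) :
    ∃ a ∈ A, a ∉ B ∧ ∃ b ∈ B, b ≠ 0 ∧ ∃ c ∈ wedge2 K B,
      A = B ⊔ Submodule.span K {a} ∧
      ExteriorAlgebra.ι K a * ExteriorAlgebra.ι K b + c ∉ N ⊓ wedge2 K B ∧
      N ⊓ wedge2 K A =
        (N ⊓ wedge2 K B) ⊔
          Submodule.span K {ExteriorAlgebra.ι K a * ExteriorAlgebra.ι K b + c} := by
  obtain ⟨a, haA, haB, hA⟩ := gen_of_fdim_one' hBA hdim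
  have hNle : N ⊓ wedge2 K B ≤ N ⊓ wedge2 K A := inf_le_inf_left _ (wedge2_mono' hBA)
  have hfd : fdim K (N ⊓ wedge2 K B) (N ⊓ wedge2 K A) = 1 := by
    rw [pdim, hdim] at hdelta; omega
  obtain ⟨z, hzNA, hzNB, hNA⟩ := gen_of_fdim_one' hNle hfd
  have hzA : z ∈ wedge2 K (B ⊔ Submodule.span K {a}) := hA ▸ hzNA.2
  obtain ⟨b, hb, c, hc, rfl⟩ := wedge2_decomp' hzA
  refine ⟨a, haA, haB, b, hb, ?_, c, hc, hA, hzNB, hNA⟩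
  rintro rfl
  apply hzNB
  have heq : ExteriorAlgebra.ι K a * ExteriorAlgebra.ι K (0 : M) + c = c := by simp
  exact ⟨hzNA.1, by rw [heq]; exact hc⟩


end
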